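/- arXiv:1201.3273 — 9 statements merged into one kernel-verified Lean document; each statement's English description precedes it below -/
import Mathlib

section
/- Let G be a proper interval graph on {1,…,n} with a [λ,C]-block partition whose parts, listed in increasing order of their vertices, are P₁, P₂, …, P_t. Then the assignment giving every vertex of Pᵢ the color ((i−1) mod λ) + 1 is a [λ,C]-coloring of G. -/
/-- Reachability inside a set `S`: there is a walk from `u` to `v` all of whose
vertices lie in `S`. -/
def ReachIn {α : Type*} (G : SimpleGraph α) (S : Set α) (u v : α) : Prop :=
  Relation.ReflTransGen (fun a b => G.Adj a b ∧ a ∈ S ∧ b ∈ S) u v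

/-- The subgraph induced by `S` is connected. -/
def ConnectedIn {α : Type*} (G : SimpleGraph α) (S : Set α) : Prop :=
  ∀ u ∈ S, ∀ v ∈ S, ReachIn G S u v

/-- `G` is a graph on the vertex set `{1,…,n}`. -/
def OnRange (n : ℕ) (G : SimpleGraph ℕ) : Prop :=
  ∀ u v : ℕ, G.Adj u v → u ∈ Set.Icc 1 n ∧ v ∈ Set.Icc 1 n

/-- The umbrella property characterising proper interval graphs. -/
def Umbrella (G : SimpleGraph ℕ) : Prop :=
  ∀ u v w : ℕ, u < v → v < w → G.Adj u w → G.Adj u v ∧ G.Adj v w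

/-- `Ps` is a partition of the vertex set `{1,…,n}`. -/
def IsPartitionOf (n : ℕ) (Ps : Set (Set ℕ)) : Prop :=
  (∀ P ∈ Ps, P.Nonempty) ∧ Ps.PairwiseDisjoint id ∧ ⋃₀ Ps = Set.Icc 1 n

/-- A `[λ,C]`-partition of the graph `G` on `{1,…,n}`: every part induces a
connected subgraph, every part has at most `C` vertices, and every clique
meets at most `L` parts. -/
def IsLCPartition (n : ℕ) (G : SimpleGraph ℕ) (L C : ℕ) (Ps : Set (Set ℕ)) : Prop :=
  IsPartitionOf n Ps ∧ (∀ P ∈ Ps, ConnectedIn G P ∧ P.ncard ≤ C) ∧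
    ∀ K : Set ℕ, G.IsClique K → {P ∈ Ps | (P ∩ K).Nonempty}.ncard ≤ L

/-- A block: a set of consecutive vertices `{u, u+1, …, v}` with `1 ≤ u ≤ v`. -/
def IsBlockSet (P : Set ℕ) : Prop := ∃ u v : ℕ, 1 ≤ u ∧ u ≤ v ∧ P = Set.Icc u v

/-- A `[λ,C]`-block partition: a `[λ,C]`-partition all of whose parts are blocks. -/
def IsLCBlockPartition (n : ℕ) (G : SimpleGraph ℕ) (L C : ℕ) (Ps : Set (Set ℕ)) : Prop :=
  IsLCPartition n G L C Ps ∧ ∀ P ∈ Ps, IsBlockSet P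

/-- A `[λ,C]`-coloring of the graph `G` on `{1,…,n}` with colors `Fin L`:
every monochromatic component has at most `C` vertices. -/
def IsLCColoring (n : ℕ) (G : SimpleGraph ℕ) (C : ℕ) {L : ℕ} (c : ℕ → Fin L) : Prop :=
  ∀ v ∈ Set.Icc 1 n, {u | ReachIn G {w | c w = c v} v u}.ncard ≤ C

/-- The clique number of `G`. -/
noncomputable def cliqueNumber (G : SimpleGraph ℕ) : ℕ :=
  sSup {m | ∃ s : Finset ℕ, G.IsNClique m s}

/-- The graph `G` on `{1,…,n}` is connected. -/
def ConnectedOn (n : ℕ) (G : SimpleGraph ℕ) : Prop :=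
  ConnectedIn G (Set.Icc 1 n)

lemma adj_of_between (G : SimpleGraph ℕ) (humb : Umbrella G) {a b u v : ℕ}
    (hab : G.Adj a b) (hau : a ≤ u) (huv : u < v) (hvb : v ≤ b) : G.Adj u v := by
  have hav : G.Adj a v := by
    rcases eq_or_lt_of_le hvb with h2 | h2
    · subst h2; exact hab
    · exact (humb a v b (lt_of_le_of_lt hau huv) h2 hab).1
  rcases eq_or_lt_of_le hau with h | h
  · subst h; exact hav
  · exact (humb a u v h huv hav).2

lemma clique_Icc (G : SimpleGraph ℕ) (humb : Umbrella G) {a b : ℕ}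
    (hab : G.Adj a b) : G.IsClique (Set.Icc a b) := by
  intro u hu v hv huv
  rcases lt_or_gt_of_ne huv with h | h
  · exact adj_of_between G humb hab hu.1 h hv.2
  · exact (adj_of_between G humb hab hv.1 h hu.2).symm

lemma same_part (n : ℕ) (G : SimpleGraph ℕ) (humb : Umbrella G) (L C : ℕ)
    (t : ℕ) (P : Fin t → Set ℕ) (hinj : Function.Injective P)
    (hbp : IsLCBlockPartition n G L C (Set.range P))
    (hord : ∀ i j : Fin t, i < j → ∀ u ∈ P i, ∀ v ∈ P j, u < v)
    {a b : ℕ} {i j : Fin t} (hab : G.Adj a b) (ha : a ∈ P i) (hb : b ∈ P j)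
    (hmod : (i : ℕ) % L = (j : ℕ) % L) : i = j := by
  classical
  have key : ∀ (a b : ℕ) (i j : Fin t), G.Adj a b → a ∈ P i → b ∈ P j →
      (i : ℕ) % L = (j : ℕ) % L → i < j → False := by
    intro a b i j hab ha hb hmod hij
    have hij' : (i : ℕ) < (j : ℕ) := hij
    have hdvd : L ∣ (j : ℕ) - (i : ℕ) :=
      (Nat.modEq_iff_dvd' (le_of_lt hij')).mp hmod
    have hLle : L ≤ (j : ℕ) - (i : ℕ) := Nat.le_of_dvd (by omega) hdvd
    have haltb : a < b := hord i j hij a ha b hb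
    set K : Set ℕ := Set.Icc a b with hK
    have hclique : G.IsClique K := clique_Icc G humb hab
    have hcl := hbp.1.2.2 K hclique
    -- every part P p with i ≤ p ≤ j meets K
    have hmeet : ∀ p : Fin t, p ∈ Finset.Icc i j → P p ∈ {Q ∈ Set.range P | (Q ∩ K).Nonempty} := by
      intro p hp
      rw [Finset.mem_Icc] at hp
      refine ⟨⟨p, rfl⟩, ?_⟩
      rcases eq_or_lt_of_le hp.1 with h1 | h1
      · exact ⟨a, h1 ▸ ha, Set.mem_Icc.2 ⟨le_refl a, le_of_lt haltb⟩⟩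
      rcases eq_or_lt_of_le hp.2 with h2 | h2
      · exact ⟨b, h2 ▸ hb, Set.mem_Icc.2 ⟨le_of_lt haltb, le_refl b⟩⟩
      obtain ⟨x, hx⟩ := hbp.1.1.1 (P p) ⟨p, rfl⟩
      exact ⟨x, hx, Set.mem_Icc.2 ⟨le_of_lt (hord i p h1 a ha x hx),
        le_of_lt (hord p j h2 x hx b hb)⟩⟩
    have hsub : ↑((Finset.Icc i j).image P) ⊆ {Q ∈ Set.range P | (Q ∩ K).Nonempty} := by
      intro Q hQ
      simp only [Finset.coe_image, Set.mem_image, Finset.mem_coe] at hQ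
      obtain ⟨p, hp, rfl⟩ := hQ
      exact hmeet p hp
    have hfin : {Q ∈ Set.range P | (Q ∩ K).Nonempty}.Finite :=
      (Set.finite_range P).subset (fun Q hQ => hQ.1)
    have hcard1 : ((Finset.Icc i j).image P).card ≤ {Q ∈ Set.range P | (Q ∩ K).Nonempty}.ncard := by
      rw [← Set.ncard_coe_finset]
      exact Set.ncard_le_ncard hsub hfin
    rw [Finset.card_image_of_injective _ hinj, Fin.card_Icc] at hcard1
    omega
  rcases lt_trichotomy i j with h | h | h
  · exact absurd (key a b i j hab ha hb hmod h) (by simp)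
  · exact h
  · exact absurd (key b a j i hab.symm hb ha hmod.symm h) (by simp)

/-- given a `[λ,C]`-block partition of a proper interval graph with
parts `P 0, P 1, …` listed in increasing order of their vertices, the assignment
giving the vertices of the `i`-th part color `i mod λ` is a `[λ,C]`-coloring. -/
theorem blockPartition_gives_coloring (n : ℕ) (G : SimpleGraph ℕ)
    (hrange : OnRange n G) (humb : Umbrella G) (L C : ℕ) (hL : 0 < L) (hC : 0 < C)
    (t : ℕ) (P : Fin t → Set ℕ) (hinj : Function.Injective P)
    (hbp : IsLCBlockPartition n G L C (Set.range P))
    (hord : ∀ i j : Fin t, i < j → ∀ u ∈ P i, ∀ v ∈ P j, u < v)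
    (c : ℕ → Fin L) (hc : ∀ i : Fin t, ∀ v ∈ P i, (c v : ℕ) = (i : ℕ) % L) :
    IsLCColoring n G C c := by
  intro v hv
  have hvU : v ∈ ⋃₀ Set.range P := by rw [hbp.1.1.2.2]; exact hv
  obtain ⟨Q, ⟨i, rfl⟩, hvQ⟩ := hvU
  have hsub : {u | ReachIn G {w | c w = c v} v u} ⊆ P i := by
    intro u hu
    have : ∀ u, ReachIn G {w | c w = c v} v u → u ∈ P i := by
      intro u hu
      induction hu with
      | refl => exact hvQ
      | tail _ hstep ih =>
        rename_i b u _
        obtain ⟨hadj, hbS, huS⟩ := hstep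
        have hun : u ∈ Set.Icc 1 n := (hrange b u hadj).2
        have : u ∈ ⋃₀ Set.range P := by rw [hbp.1.1.2.2]; exact hun
        obtain ⟨R, ⟨j, rfl⟩, huR⟩ := this
        have hcb : (c b : ℕ) = (i : ℕ) % L := hc i b ih
        have hcu : (c u : ℕ) = (j : ℕ) % L := hc j u huR
        have hmod : (i : ℕ) % L = (j : ℕ) % L := by
          have : c b = c u := by
            simp only [Set.mem_setOf_eq] at hbS huS
            rw [hbS, huS]
          rw [← hcb, ← hcu, this]
        have : i = j := same_part n G humb L C t P hinj hbp hord hadj ih huR hmod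
        rw [this]; exact huR
    exact this u hu
  have hfin : (P i).Finite := by
    obtain ⟨a, b, _, _, hPi⟩ := hbp.2 (P i) ⟨i, rfl⟩
    rw [hPi]; exact Set.finite_Icc a b
  calc {u | ReachIn G {w | c w = c v} v u}.ncard ≤ (P i).ncard :=
        Set.ncard_le_ncard hsub hfin
    _ ≤ C := (hbp.1.2.1 (P i) ⟨i, rfl⟩).2
end

section
/- Let G be a connected proper interval graph on {1,…,n} and let C be a positive integer. Then the partition of {1,…,n} whose parts are the blocks [(i−1)C+1, min(n, iC)] for i = 1, …, ⌈n/C⌉ is a [⌈(ω(G)+C−1)/C⌉, C]-block partition of G. -/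
/-!
Consecutive vertices of a connected proper interval graph are adjacent: some edge of a path from
`u` to `n` crosses the cut between `u` and `u + 1`, and the umbrella property passes adjacency
inward to nested pairs. Hence every block induces a connected subgraph. If a clique meets the
blocks `i ≤ j` in vertices `a ≤ i C` and `b > (j - 1) C`, the umbrella property makes the whole
interval `[a, b]` a clique, so `ω ≥ b - a + 1 ≥ (j - i - 1) C + 2`, i.e. `j - i + 1 ≤ ⌈(ω + C - 1) / C⌉`.
-/

theorem Relation.ReflTransGen.exists_step_across {α : Type*} [LinearOrder α] {r : α → α → Prop}
    {x y u : α} (h : Relation.ReflTransGen r x y) (hx : x ≤ u) (hy : u < y) :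
    ∃ a b, r a b ∧ a ≤ u ∧ u < b := by
  induction h with
  | refl => exact absurd (hx.trans_lt hy) (lt_irrefl x)
  | @tail c d _ step ih =>
    by_cases hc : c ≤ u
    · exact ⟨c, d, step, hc, hy⟩
    · exact ih (not_le.1 hc)

theorem ReachIn.symm {α : Type*} {G : SimpleGraph α} {S : Set α} {u v : α}
    (h : ReachIn G S u v) : ReachIn G S v u := by
  induction h with
  | refl => exact .refl
  | tail _ step ih => exact .head ⟨step.1.symm, step.2.2, step.2.1⟩ ih

theorem connectedIn_Icc_of_adj_succ {G : SimpleGraph ℕ} {l r : ℕ}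
    (hsucc : ∀ u, l ≤ u → u < r → G.Adj u (u + 1)) : ConnectedIn G (Set.Icc l r) := by
  have reach_left : ∀ v ∈ Set.Icc l r, ReachIn G (Set.Icc l r) l v := by
    rintro v ⟨hlv, hvr⟩
    induction v, hlv using Nat.le_induction with
    | base => exact .refl
    | succ w hlw ih =>
      exact .tail (ih (by omega)) ⟨hsucc w hlw (by omega), ⟨hlw, by omega⟩, ⟨by omega, hvr⟩⟩
  exact fun u hu v hv => (reach_left u hu).symm.trans (reach_left v hv)

namespace Umbrella

variable {G : SimpleGraph ℕ}

theorem adj_of_nested (humb : Umbrella G) {a b x y : ℕ} (hax : a ≤ x) (hxy : x < y)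
    (hyb : y ≤ b) (hab : G.Adj a b) : G.Adj x y := by
  have hxb : G.Adj x b := by
    rcases hax.eq_or_lt with rfl | hax
    · exact hab
    · exact (humb a x b hax (by omega) hab).2
  rcases hyb.eq_or_lt with rfl | hyb
  · exact hxb
  · exact (humb x y b hxy hyb hxb).1

theorem isClique_Icc (humb : Umbrella G) {K : Set ℕ} (hK : G.IsClique K) {a b : ℕ}
    (ha : a ∈ K) (hb : b ∈ K) : G.IsClique (Set.Icc a b) := by
  have nested : ∀ x ∈ Set.Icc a b, ∀ y ∈ Set.Icc a b, x < y → G.Adj x y :=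
    fun x hx y hy hxy => humb.adj_of_nested hx.1 hxy hy.2 (hK ha hb (hx.1.trans_lt (hxy.trans_le hy.2)).ne)
  intro x hx y hy hxy
  rcases hxy.lt_or_gt with h | h
  · exact nested x hx y hy h
  · exact (nested y hy x hx h).symm

theorem adj_succ (humb : Umbrella G) {n : ℕ} (hconn : ConnectedOn n G) {u : ℕ}
    (h1 : 1 ≤ u) (h2 : u < n) : G.Adj u (u + 1) := by
  obtain ⟨a, b, ⟨hab, -, -⟩, hau, hub⟩ :=
    (hconn u ⟨h1, h2.le⟩ n ⟨by omega, le_rfl⟩).exists_step_across le_rfl h2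
  exact humb.adj_of_nested hau (Nat.lt_succ_self u) hub hab

theorem connectedIn_Icc (humb : Umbrella G) {n : ℕ} (hconn : ConnectedOn n G) {l r : ℕ}
    (hl : 1 ≤ l) (hr : r ≤ n) : ConnectedIn G (Set.Icc l r) :=
  connectedIn_Icc_of_adj_succ fun _ hlu hur => humb.adj_succ hconn (by omega) (by omega)

end Umbrella

section CliqueNumber

variable {n : ℕ} {G : SimpleGraph ℕ}

theorem OnRange.bddAbove_cliqueSizes (hrange : OnRange n G) :
    BddAbove {m | ∃ s : Finset ℕ, G.IsNClique m s} := by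
  refine ⟨n + 1, fun m ⟨s, hs⟩ => ?_⟩
  rcases le_or_gt m 1 with h | h
  · omega
  have hsub : s ⊆ Finset.Icc 1 n := by
    intro x hx
    obtain ⟨y, hy, hyx⟩ := Finset.exists_mem_ne (by rw [hs.card_eq]; omega) x
    simpa using (hrange x y (hs.isClique hx hy hyx.symm)).1
  calc m = s.card := hs.card_eq.symm
    _ ≤ (Finset.Icc 1 n).card := Finset.card_le_card hsub
    _ ≤ n + 1 := by simp

theorem OnRange.sub_add_one_le_cliqueNumber (hrange : OnRange n G) (humb : Umbrella G)
    {K : Set ℕ} (hK : G.IsClique K) {a b : ℕ} (ha : a ∈ K) (hb : b ∈ K) :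
    b + 1 - a ≤ cliqueNumber G := by
  rw [← Nat.card_Icc]
  refine le_csSup hrange.bddAbove_cliqueSizes ⟨Finset.Icc a b, ?_, rfl⟩
  simpa using humb.isClique_Icc hK ha hb

end CliqueNumber

theorem ncard_le_of_forall_lt_add {I : Set ℕ} {L : ℕ} (h : ∀ i ∈ I, ∀ j ∈ I, j < i + L) :
    I.ncard ≤ L := by
  rcases I.eq_empty_or_nonempty with rfl | hne
  · simp
  have hsub : I ⊆ Set.Ico (sInf I) (sInf I + L) :=
    fun j hj => ⟨Nat.sInf_le hj, h _ (Nat.sInf_mem hne) j hj⟩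
  calc I.ncard ≤ (Set.Ico (sInf I) (sInf I + L)).ncard := Set.ncard_le_ncard hsub
    _ = L := by simp

theorem Nat.mul_eq_sub_one_mul_add {i : ℕ} (hi : 1 ≤ i) (C : ℕ) : i * C = (i - 1) * C + C := by
  rw [Nat.sub_one_mul]
  have := Nat.le_mul_of_pos_left C hi
  omega

def simpleBlock (n C i : ℕ) : Set ℕ := Set.Icc ((i - 1) * C + 1) (min n (i * C))

def simplePart (n C : ℕ) : Set (Set ℕ) :=
  {P | ∃ i, 1 ≤ i ∧ i ≤ (n + C - 1) / C ∧ P = simpleBlock n C i}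

section SimplePart

variable {n C : ℕ}

theorem mem_simpleBlock {i v : ℕ} :
    v ∈ simpleBlock n C i ↔ (i - 1) * C < v ∧ v ≤ n ∧ v ≤ i * C := by
  simp only [simpleBlock, Set.mem_Icc, le_min_iff]
  omega

theorem simpleBlock_start_le (hC : 0 < C) {i : ℕ} (hi : 1 ≤ i) (him : i ≤ (n + C - 1) / C) :
    (i - 1) * C + 1 ≤ min n (i * C) := by
  have := (Nat.le_div_iff_mul_le hC).1 him
  have := Nat.mul_eq_sub_one_mul_add hi C
  omega

theorem disjoint_simpleBlock {i j : ℕ} (hij : i < j) :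
    Disjoint (simpleBlock n C i) (simpleBlock n C j) := by
  have := Nat.mul_le_mul_right C (Nat.le_sub_one_of_lt hij)
  refine Set.disjoint_left.2 fun v hvi hvj => ?_
  rw [mem_simpleBlock] at hvi hvj
  omega

theorem mem_sUnion_simplePart (hC : 0 < C) {v : ℕ} (hv : 1 ≤ v) (hvn : v ≤ n) :
    v ∈ ⋃₀ simplePart n C := by
  have hindex : (v - 1) / C + 1 ≤ (n + C - 1) / C := by
    rw [← Nat.add_div_right _ hC]
    exact Nat.div_le_div_right (by omega)
  refine ⟨_, ⟨(v - 1) / C + 1, le_add_self, hindex, rfl⟩, ?_⟩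
  have := Nat.div_mul_le_self (v - 1) C
  have := Nat.lt_div_mul_add (a := v - 1) hC
  rw [mem_simpleBlock, Nat.add_sub_cancel, Nat.add_mul, one_mul]
  omega

theorem ncard_simpleBlock_le {i : ℕ} (hi : 1 ≤ i) : (simpleBlock n C i).ncard ≤ C := by
  have := Nat.mul_eq_sub_one_mul_add hi C
  simp only [simpleBlock, Set.ncard_Icc_nat]
  omega

theorem isPartitionOf_simplePart (hC : 0 < C) : IsPartitionOf n (simplePart n C) := by
  refine ⟨?_, ?_, ?_⟩
  · rintro _ ⟨i, hi, him, rfl⟩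
    exact Set.nonempty_Icc.2 (simpleBlock_start_le hC hi him)
  · rintro _ ⟨i, -, -, rfl⟩ _ ⟨j, -, -, rfl⟩ hne
    rcases lt_or_gt_of_ne (fun h : i = j => hne (h ▸ rfl)) with h | h
    · exact disjoint_simpleBlock h
    · exact (disjoint_simpleBlock h).symm
  · ext v
    constructor
    · rintro ⟨_, ⟨i, -, -, rfl⟩, hv⟩
      rw [mem_simpleBlock] at hv
      exact ⟨by omega, hv.2.1⟩
    · exact fun hv => mem_sUnion_simplePart hC hv.1 hv.2

theorem lt_add_of_mem_simpleBlock (hC : 0 < C) {i j a b ω : ℕ} (hi : 1 ≤ i)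
    (ha : a ∈ simpleBlock n C i) (hb : b ∈ simpleBlock n C j) (hω : b + 1 - a ≤ ω) :
    j < i + (ω + C - 1 + C - 1) / C := by
  rcases lt_or_ge j i with hji | hij
  · exact Nat.lt_add_right _ hji
  suffices (j - i + 1) * C ≤ ω + C - 1 + C - 1 by
    have := (Nat.le_div_iff_mul_le hC).2 this
    omega
  have hspan : (j - i + 1) * C + (i - 1) * C = j * C := by
    rw [← Nat.add_mul]
    congr 1
    omega
  have := Nat.mul_eq_sub_one_mul_add hi C
  have := Nat.mul_eq_sub_one_mul_add (hi.trans hij) C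
  have := Nat.mul_le_mul_right C (Nat.sub_le_sub_right hij 1)
  rw [mem_simpleBlock] at ha hb
  omega

theorem ncard_simplePart_meeting_clique_le {G : SimpleGraph ℕ} (hrange : OnRange n G)
    (humb : Umbrella G) (hC : 0 < C) {K : Set ℕ} (hK : G.IsClique K) :
    {P ∈ simplePart n C | (P ∩ K).Nonempty}.ncard ≤ (cliqueNumber G + C - 1 + C - 1) / C := by
  set I := {i | 1 ≤ i ∧ i ≤ (n + C - 1) / C ∧ (simpleBlock n C i ∩ K).Nonempty}
  have hI : I.Finite := (Set.finite_Icc 1 ((n + C - 1) / C)).subset fun i hi => ⟨hi.1, hi.2.1⟩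
  have hS : {P ∈ simplePart n C | (P ∩ K).Nonempty} ⊆ simpleBlock n C '' I := by
    rintro _ ⟨⟨i, hi, him, rfl⟩, hiK⟩
    exact ⟨i, ⟨hi, him, hiK⟩, rfl⟩
  calc _ ≤ (simpleBlock n C '' I).ncard := Set.ncard_le_ncard hS (hI.image _)
    _ ≤ I.ncard := Set.ncard_image_le hI
    _ ≤ _ := ncard_le_of_forall_lt_add fun i ⟨hi, _, _, ha, haK⟩ j ⟨_, _, _, hb, hbK⟩ =>
        lt_add_of_mem_simpleBlock hC hi ha hb (hrange.sub_add_one_le_cliqueNumber humb hK haK hbK)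

end SimplePart

theorem simplePart_is_blockPartition_general (n : ℕ) (G : SimpleGraph ℕ)
    (hrange : OnRange n G) (humb : Umbrella G) (hconn : ConnectedOn n G)
    (C : ℕ) (hC : 0 < C) :
    IsLCBlockPartition n G ((cliqueNumber G + C - 1 + C - 1) / C) C
      {P : Set ℕ | ∃ i : ℕ, 1 ≤ i ∧ i ≤ (n + C - 1) / C ∧
        P = Set.Icc ((i - 1) * C + 1) (min n (i * C))} := by
  refine ⟨⟨isPartitionOf_simplePart hC, ?_,
    fun K hK => ncard_simplePart_meeting_clique_le hrange humb hC hK⟩, ?_⟩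
  · rintro _ ⟨i, hi, -, rfl⟩
    exact ⟨humb.connectedIn_Icc hconn le_add_self (min_le_left _ _), ncard_simpleBlock_le hi⟩
  · rintro _ ⟨i, hi, him, rfl⟩
    exact ⟨_, _, le_add_self, simpleBlock_start_le hC hi him, rfl⟩

/-- for a connected proper interval graph on `{1,…,n}`, the partition
into the blocks `[(i-1)C+1, min n (iC)]`, `i = 1,…,⌈n/C⌉`, is a
`[⌈(ω(G)+C-1)/C⌉, C]`-block partition (ceilings written with natural division). -/
theorem simplePart_is_blockPartition (n : ℕ) (G : SimpleGraph ℕ)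
    (hrange : OnRange n G) (humb : Umbrella G) (hconn : ConnectedOn n G)
    (hn : 0 < n) (C : ℕ) (hC : 0 < C) :
    IsLCBlockPartition n G ((cliqueNumber G + C - 1 + C - 1) / C) C
      {P : Set ℕ | ∃ i : ℕ, 1 ≤ i ∧ i ≤ (n + C - 1) / C ∧
        P = Set.Icc ((i - 1) * C + 1) (min n (i * C))} :=
  simplePart_is_blockPartition_general n G hrange humb hconn C hC
end

section
/- Let G be a connected proper interval graph on {1,…,n}, let C be a positive integer, and let λ* be the least positive integer λ such that G has a [λ,C]-coloring. Then ⌈ω(G)/C⌉ ≤ λ* ≤ ⌈(ω(G)+C−1)/C⌉. -/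
/-- for a connected proper interval graph, the least `λ` for which a
`[λ,C]`-coloring exists satisfies `⌈ω/C⌉ ≤ λ* ≤ ⌈(ω+C-1)/C⌉` (ceilings written
with natural division). -/
theorem optimal_coloring_bounds (n : ℕ) (G : SimpleGraph ℕ)
    (hrange : OnRange n G) (humb : Umbrella G) (hconn : ConnectedOn n G)
    (hn : 0 < n) (C : ℕ) (hC : 0 < C) (lamStar : ℕ)
    (hstar : IsLeast {L : ℕ | 0 < L ∧ ∃ c : ℕ → Fin L, IsLCColoring n G C c} lamStar) :
    (cliqueNumber G + C - 1) / C ≤ lamStar ∧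
      lamStar ≤ (cliqueNumber G + C - 1 + C - 1) / C := by
  classical
  set ω := cliqueNumber G with hωdef
  -- the clique-size set is bounded above by n
  have hbdd : BddAbove {m | ∃ s : Finset ℕ, G.IsNClique m s} := by
    refine ⟨n, fun m hm => ?_⟩
    obtain ⟨s, hs⟩ := hm
    rcases le_or_gt m 1 with h1 | h1
    · omega
    · have hsub : s ⊆ Finset.Icc 1 n := by
        intro x hx
        obtain ⟨y, hy, hyx⟩ := Finset.exists_mem_ne (by rw [hs.2]; omega) x
        have hadj : G.Adj y x := hs.1 hy hx hyx
        have := (hrange y x hadj).2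
        simp only [Set.mem_Icc] at this
        simp only [Finset.mem_Icc]
        omega
      have := Finset.card_le_card hsub
      rw [hs.2] at this
      rw [Nat.card_Icc] at this
      omega
  have hω1 : 1 ≤ ω := by
    apply le_csSup hbdd
    exact ⟨{0}, by constructor <;> simp⟩
  -- edge span lemma
  have hedge : ∀ a b : ℕ, G.Adj a b → a < b → b - a + 1 ≤ ω := by
    intro a b hab hlt
    have key : ∀ x y : ℕ, a ≤ x → x < y → y ≤ b → G.Adj x y := by
      intro x y hax hxy hyb
      have hxb : G.Adj x b := by
        rcases eq_or_lt_of_le hax with h | h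
        · exact h ▸ hab
        · exact (humb a x b h (lt_of_lt_of_le hxy hyb) hab).2
      rcases eq_or_lt_of_le hyb with h | h
      · exact h ▸ hxb
      · exact (humb x y b hxy h hxb).1
    have hclique : G.IsClique (Finset.Icc a b : Set ℕ) := by
      intro x hx y hy hxy
      simp only [Finset.coe_Icc, Set.mem_Icc] at hx hy
      rcases lt_or_gt_of_ne hxy with h | h
      · exact key x y hx.1 h hy.2
      · exact (key y x hy.1 h hx.2).symm
    apply le_csSup hbdd
    exact ⟨Finset.Icc a b, hclique, by rw [Nat.card_Icc]; omega⟩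
  -- reach sets are finite
  have hreachfin : ∀ (S : Set ℕ) (v : ℕ), {u | ReachIn G S v u}.Finite := by
    intro S v
    apply Set.Finite.subset ((Set.finite_Icc 1 n).insert v)
    intro u hu
    induction hu with
    | refl => exact Set.mem_insert _ _
    | tail _ hstep ih => exact Set.mem_insert_of_mem _ (hrange _ _ hstep.1).2
  constructor
  · -- lower bound: ω ≤ lamStar * C
    obtain ⟨hL0, c, hcol⟩ := hstar.1
    obtain ⟨s, hs⟩ : ∃ s : Finset ℕ, G.IsNClique ω s := by
      have hne : {m | ∃ s : Finset ℕ, G.IsNClique m s}.Nonempty :=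
        ⟨1, {0}, by constructor <;> simp⟩
      exact Nat.sSup_mem hne hbdd
    have hfib : ∀ i : Fin lamStar, (s.filter fun x => c x = i).card ≤ C := by
      intro i
      rcases le_or_gt (s.filter fun x => c x = i).card 1 with h1 | h1
      · exact le_trans h1 hC
      · obtain ⟨v, hv⟩ := Finset.card_pos.mp (lt_trans Nat.zero_lt_one h1)
        obtain ⟨u, hu, huv⟩ := Finset.exists_mem_ne h1 v
        have hv' := Finset.mem_filter.mp hv
        have hu' := Finset.mem_filter.mp hu
        have hadjvu : G.Adj v u := hs.1 hv'.1 hu'.1 (Ne.symm huv)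
        have hvIcc : v ∈ Set.Icc 1 n := (hrange v u hadjvu).1
        have hsub : ((s.filter fun x => c x = i : Finset ℕ) : Set ℕ)
            ⊆ {u | ReachIn G {w | c w = c v} v u} := by
          intro x hx
          have hx' := Finset.mem_filter.mp (Finset.mem_coe.mp hx)
          rcases eq_or_ne x v with rfl | hxv
          · exact Relation.ReflTransGen.refl
          · refine Relation.ReflTransGen.single ⟨hs.1 hv'.1 hx'.1 (Ne.symm hxv), rfl, ?_⟩
            show c x = c v
            rw [hx'.2, hv'.2]
        calc (s.filter fun x => c x = i).card
            = ((s.filter fun x => c x = i : Finset ℕ) : Set ℕ).ncard :=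
              (Set.ncard_coe_finset _).symm
          _ ≤ {u | ReachIn G {w | c w = c v} v u}.ncard :=
              Set.ncard_le_ncard hsub (hreachfin _ _)
          _ ≤ C := hcol v hvIcc
    have hsum : s.card = ∑ i : Fin lamStar, (s.filter fun x => c x = i).card :=
      Finset.card_eq_sum_card_fiberwise (fun x _ => Finset.mem_univ (c x))
    have hωle : ω ≤ lamStar * C := by
      rw [← hs.2, hsum]
      calc ∑ i : Fin lamStar, (s.filter fun x => c x = i).card
          ≤ ∑ _i : Fin lamStar, C := Finset.sum_le_sum (fun i _ => hfib i)
        _ = lamStar * C := by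
            rw [Finset.sum_const, Finset.card_univ, Fintype.card_fin, smul_eq_mul]
    rw [Nat.div_le_iff_le_mul_add_pred hC, mul_comm]
    omega
  · -- upper bound
    set L0 := (ω + C - 1 + C - 1) / C with hL0def
    have hL0pos : 0 < L0 := Nat.div_pos (by omega) hC
    have hL0C : ω + C - 1 ≤ L0 * C := by
      have h2 : ω + C - 1 + C - 1 < (L0 + 1) * C :=
        (Nat.div_lt_iff_lt_mul hC).mp (Nat.lt_succ_self L0)
      rw [add_mul, one_mul] at h2
      omega
    apply hstar.2
    refine ⟨hL0pos, fun v => ⟨(v - 1) / C % L0, Nat.mod_lt _ hL0pos⟩, ?_⟩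
    intro v hv
    set c : ℕ → Fin L0 := fun v => ⟨(v - 1) / C % L0, Nat.mod_lt _ hL0pos⟩ with hcdef
    set k := (v - 1) / C with hk
    -- key: adjacent same-colored vertices lie in the same block
    have hkey : ∀ a b : ℕ, G.Adj a b → c a = c b → (a - 1) / C = (b - 1) / C := by
      have main : ∀ a b : ℕ, G.Adj a b → a < b → c a = c b → (a - 1) / C = (b - 1) / C := by
        intro a b hab hlt hc
        set ka := (a - 1) / C with hka
        set kb := (b - 1) / C with hkb
        have hmod : ka % L0 = kb % L0 := by
          have := congrArg Fin.val hc
          simpa [hcdef] using this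
        have hle : ka ≤ kb := Nat.div_le_div_right (by omega)
        by_contra hne
        have hlt' : ka < kb := lt_of_le_of_ne hle hne
        have hgap : ka + L0 ≤ kb := by
          obtain ⟨t, ht⟩ := (Nat.modEq_iff_dvd' hle).mp hmod
          have ht0 : 0 < t := by
            rcases Nat.eq_zero_or_pos t with h | h
            · rw [h, mul_zero] at ht; omega
            · exact h
          have : L0 ≤ L0 * t := Nat.le_mul_of_pos_right L0 ht0
          omega
        have ha1 : a - 1 < (ka + 1) * C :=
          (Nat.div_lt_iff_lt_mul hC).mp (Nat.lt_succ_self ka)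
        rw [add_mul, one_mul] at ha1
        have hb1 : kb * C ≤ b - 1 := Nat.div_mul_le_self _ _
        have h3 : (ka + L0) * C ≤ kb * C := Nat.mul_le_mul_right C hgap
        rw [add_mul] at h3
        have hspan : b - a + 1 ≤ ω := hedge a b hab hlt
        omega
      intro a b hab hc
      rcases lt_trichotomy a b with h | h | h
      · exact main a b hab h hc
      · subst h; rfl
      · exact (main b a hab.symm h hc.symm).symm
    have hinv : ∀ u, ReachIn G {w | c w = c v} v u → 1 ≤ u ∧ (u - 1) / C = k := by
      intro u hu
      induction hu with
      | refl =>
        simp only [Set.mem_Icc] at hv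
        exact ⟨hv.1, rfl⟩
      | tail _ hstep ih =>
        rename_i b d hwalk
        have hd1 : 1 ≤ d := by
          have := (hrange _ _ hstep.1).2
          simp only [Set.mem_Icc] at this; omega
        have hcb : c b = c d := by
          have h1 : c b = c v := hstep.2.1
          have h2 : c d = c v := hstep.2.2
          rw [h1, h2]
        have := hkey b d hstep.1 hcb
        exact ⟨hd1, by omega⟩
    have hsub : {u | ReachIn G {w | c w = c v} v u} ⊆ Set.Icc (k * C + 1) (k * C + C) := by
      intro u hu
      obtain ⟨hu1, huk⟩ := hinv u hu
      have h1 : k * C ≤ u - 1 := huk ▸ Nat.div_mul_le_self _ _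
      have h2 : u - 1 < (k + 1) * C := by
        rw [← Nat.div_lt_iff_lt_mul hC, huk]
        omega
      rw [add_mul, one_mul] at h2
      simp only [Set.mem_Icc]
      omega
    calc {u | ReachIn G {w | c w = c v} v u}.ncard
        ≤ (Set.Icc (k * C + 1) (k * C + C)).ncard :=
          Set.ncard_le_ncard hsub (Set.finite_Icc _ _)
      _ = C := by
          rw [← Finset.coe_Icc, Set.ncard_coe_finset, Nat.card_Icc]; omega
end

section
/- Let G be a proper interval graph on {1,…,n}, let C be a positive integer and let k = ⌊(ω(G)−1)/C⌋. If a vertex i is primarily forbidden, i.e., the block [i−kC, i+1] lies within {1,…,n} and is a clique of G, then in every [k+1, C]-block partition of G no part has i as its rightmost vertex. -/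
/-- if the vertex `i` is primarily forbidden (the block `[i-kC, i+1]`
lies within `{1,…,n}` and is a clique), then in every `[k+1,C]`-block partition no
part has `i` as its rightmost vertex, where `k = ⌊(ω(G)-1)/C⌋`. -/
theorem primarily_forbidden_not_rightmost (n : ℕ) (G : SimpleGraph ℕ)
    (hrange : OnRange n G) (humb : Umbrella G) (C k : ℕ) (hC : 0 < C)
    (hk : k = (cliqueNumber G - 1) / C) (i : ℕ)
    (hleft : k * C < i) (hright : i + 1 ≤ n)
    (hclique : G.IsClique (Set.Icc (i - k * C) (i + 1)))
    (Ps : Set (Set ℕ)) (hPs : IsLCBlockPartition n G (k + 1) C Ps) :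
    ∀ P ∈ Ps, i ∈ P → ∃ w ∈ P, i < w := by
  classical
  obtain ⟨⟨⟨hne, hdisj, hcover⟩, hparts, hcliq⟩, hblocks⟩ := hPs
  intro P hP hiP
  by_contra hcon
  push_neg at hcon
  have hmem : ∀ j, 1 ≤ j → j ≤ n → ∃ Q ∈ Ps, j ∈ Q := by
    intro j h1 h2
    have : j ∈ ⋃₀ Ps := by rw [hcover]; exact ⟨h1, h2⟩
    simpa [Set.mem_sUnion] using this
  set f : ℕ → Set ℕ := fun j => if h : ∃ Q ∈ Ps, j ∈ Q then h.choose else ∅ with hf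
  have hfP : ∀ j, 1 ≤ j → j ≤ n → f j ∈ Ps ∧ j ∈ f j := by
    intro j h1 h2
    have h := hmem j h1 h2
    simp only [hf, dif_pos h]
    exact ⟨h.choose_spec.1, h.choose_spec.2⟩
  have hPsub : ∀ Q ∈ Ps, Q ⊆ Set.Icc 1 n := by
    intro Q hQ x hx
    rw [← hcover]
    exact ⟨Q, hQ, hx⟩
  have hPfin : ∀ Q ∈ Ps, Q.Finite := fun Q hQ =>
    (Set.finite_Icc 1 n).subset (hPsub Q hQ)
  set s : Finset ℕ := Finset.Icc (i - k * C) i with hs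
  have hscard : s.card = k * C + 1 := by
    rw [hs, Nat.card_Icc]; omega
  have hfiber : ∀ Q ∈ s.image f, (s.filter (fun j => f j = Q)).card ≤ C := by
    intro Q hQ
    obtain ⟨j, hj, hjQ⟩ := Finset.mem_image.mp hQ
    have hjs : i - k * C ≤ j ∧ j ≤ i := Finset.mem_Icc.mp hj
    have hQPs : Q ∈ Ps := hjQ ▸ (hfP j (by omega) (by omega)).1
    have hsub : ↑(s.filter (fun j => f j = Q)) ⊆ Q := by
      intro x hx
      simp only [Finset.coe_filter, Set.mem_setOf_eq] at hx
      obtain ⟨hxs, hxQ⟩ := hx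
      have hxI := Finset.mem_Icc.mp hxs
      exact hxQ ▸ (hfP x (by omega) (by omega)).2
    calc (s.filter (fun j => f j = Q)).card
        = (↑(s.filter (fun j => f j = Q)) : Set ℕ).ncard :=
          (Set.ncard_coe_finset _).symm
      _ ≤ Q.ncard := Set.ncard_le_ncard hsub (hPfin Q hQPs)
      _ ≤ C := (hparts Q hQPs).2
  have hcount : s.card ≤ C * (s.image f).card :=
    Finset.card_le_mul_card_image s C hfiber
  have hm : k + 1 ≤ (s.image f).card := by
    have h2 : C * k < C * (s.image f).card := by rw [mul_comm C k]; omega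
    exact Nat.lt_of_mul_lt_mul_left h2
  -- the part containing i+1
  set R : Set ℕ := f (i + 1) with hR
  have hRfacts := hfP (i + 1) (by omega) hright
  have hRPs : R ∈ Ps := hRfacts.1
  have hiR : i + 1 ∈ R := hRfacts.2
  have hRnot : R ∉ s.image f := by
    intro hcontra
    obtain ⟨j, hj, hjR⟩ := Finset.mem_image.mp hcontra
    have hjI := Finset.mem_Icc.mp hj
    have hjmem : j ∈ R := hjR ▸ (hfP j (by omega) (by omega)).2
    obtain ⟨u, v, hu1, huv, hRuv⟩ := hblocks R hRPs
    rw [hRuv] at hjmem hiR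
    have hiinR : i ∈ R := by
      rw [hRuv]
      exact ⟨le_trans hjmem.1 (by omega), le_trans (by omega) hiR.2⟩
    have hPR : P = R := by
      by_contra hne'
      exact (hdisj hP hRPs hne').ne_of_mem hiP hiinR rfl
    have : i + 1 ∈ P := by
      rw [hPR, hRuv]; exact hiR
    exact absurd (hcon _ this) (by omega)
  -- the big set of parts meeting the clique
  set K : Set ℕ := Set.Icc (i - k * C) (i + 1) with hK
  have hSbound := hcliq K hclique
  have hPsfin : Ps.Finite :=
    ((Set.finite_Icc 1 n).finite_subsets).subset (fun Q hQ => hPsub Q hQ)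
  have hSfin : {Q ∈ Ps | (Q ∩ K).Nonempty}.Finite :=
    hPsfin.subset (fun Q hQ => hQ.1)
  have hsubS : insert R (↑(s.image f) : Set (Set ℕ)) ⊆ {Q ∈ Ps | (Q ∩ K).Nonempty} := by
    intro Q hQ
    rcases hQ with hQ | hQ
    · subst hQ
      exact ⟨hRPs, ⟨i + 1, hiR, by rw [hK]; exact ⟨by omega, le_refl _⟩⟩⟩
    · obtain ⟨j, hj, hjQ⟩ := Finset.mem_image.mp (by exact_mod_cast hQ)
      have hjI := Finset.mem_Icc.mp hj
      refine ⟨hjQ ▸ (hfP j (by omega) (by omega)).1, ⟨j, ?_, ?_⟩⟩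
      · exact hjQ ▸ (hfP j (by omega) (by omega)).2
      · rw [hK]; exact ⟨hjI.1, by omega⟩
  have hins : (insert R (↑(s.image f) : Set (Set ℕ))).ncard = (s.image f).card + 1 := by
    rw [Set.ncard_insert_of_notMem (by simpa using hRnot)
      ((s.image f).finite_toSet)]
    rw [Set.ncard_coe_finset]
  have hle : (insert R (↑(s.image f) : Set (Set ℕ))).ncard ≤
      {Q ∈ Ps | (Q ∩ K).Nonempty}.ncard :=
    Set.ncard_le_ncard hsubS hSfin
  omega
end

section
/- Let G be a proper interval graph on {1,…,n}, let C be a positive integer and let k = ⌊(ω(G)−1)/C⌋. If a vertex i is forbidden (i.e., i belongs to the set F of forbidden vertices), then in every [k+1, C]-block partition of G no part has i as its rightmost vertex. -/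
/-- The set of forbidden vertices: the least set containing all primarily
forbidden vertices and closed under the secondary rule. -/
inductive Forbidden (n : ℕ) (G : SimpleGraph ℕ) (C k : ℕ) : ℕ → Prop
  | primary (i : ℕ) : k * C < i → i + 1 ≤ n →
      G.IsClique (Set.Icc (i - k * C) (i + 1)) → Forbidden n G C k i
  | secondary (v s q : ℕ) : 1 ≤ s → s + 1 ≤ C → 1 ≤ q → q ≤ k →
      (∀ w ∈ Set.Icc (v - s + 1) v, Forbidden n G C k w) →
      k * C < v → G.IsClique (Set.Icc (v - k * C) (v - s + 1)) →
      Forbidden n G C k (v - q * C)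

/-- `v` is a leader: for some `1 ≤ s ≤ C-1` the block `[v-s+1, v]` consists of
forbidden vertices and the block `[v-kC, v-s+1]` is a clique. -/
def IsLeader (n : ℕ) (G : SimpleGraph ℕ) (C k : ℕ) (v : ℕ) : Prop :=
  ∃ s : ℕ, 1 ≤ s ∧ s + 1 ≤ C ∧ (∀ w ∈ Set.Icc (v - s + 1) v, Forbidden n G C k w) ∧
    k * C < v ∧ G.IsClique (Set.Icc (v - k * C) (v - s + 1))

private lemma ncard_Icc_nat (a b : ℕ) : (Set.Icc a b).ncard = b + 1 - a := by
  rw [show (Set.Icc a b) = ↑(Finset.Icc a b) by simp, Set.ncard_coe_finset, Nat.card_Icc]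

private lemma part_eq_of_mem {Ps : Set (Set ℕ)} (hdisj : Ps.PairwiseDisjoint id)
    {P Q : Set ℕ} (hP : P ∈ Ps) (hQ : Q ∈ Ps) {x : ℕ} (hxP : x ∈ P) (hxQ : x ∈ Q) :
    P = Q :=
  hdisj.elim hP hQ (Set.not_disjoint_iff.2 ⟨x, hxP, hxQ⟩)

/-- if the vertex `i` is forbidden, then in every `[k+1,C]`-block
partition no part has `i` as its rightmost vertex, where `k = ⌊(ω(G)-1)/C⌋`. -/
theorem forbidden_not_rightmost (n : ℕ) (G : SimpleGraph ℕ)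
    (hrange : OnRange n G) (humb : Umbrella G) (C k : ℕ) (hC : 0 < C)
    (hk : k = (cliqueNumber G - 1) / C) (i : ℕ)
    (hforb : Forbidden n G C k i)
    (Ps : Set (Set ℕ)) (hPs : IsLCBlockPartition n G (k + 1) C Ps) :
    ∀ P ∈ Ps, i ∈ P → ∃ w ∈ P, i < w := by
  classical
  obtain ⟨⟨⟨hne, hdisj, hcover⟩, hcs, hclq⟩, hblk⟩ := hPs
  -- each part is a block [a,b] with b+1 ≤ a+C
  have hblk' : ∀ P ∈ Ps, ∃ a b : ℕ, a ≤ b ∧ b + 1 ≤ a + C ∧ P = Set.Icc a b := by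
    intro P hP
    obtain ⟨a, b, _, hab, hPe⟩ := hblk P hP
    have hsz := (hcs P hP).2
    rw [hPe, ncard_Icc_nat] at hsz
    exact ⟨a, b, hab, by omega, hPe⟩
  -- choice of part containing a given vertex
  have hex : ∀ x : ℕ, 1 ≤ x → x ≤ n → ∃ P, P ∈ Ps ∧ x ∈ P := by
    intro x h1 h2
    have hx : x ∈ ⋃₀ Ps := by rw [hcover]; exact Set.mem_Icc.2 ⟨h1, h2⟩
    exact Set.mem_sUnion.1 hx
  choose! g hg1 hg2 using hex
  -- two vertices in the same part differ by < C
  have hspace : ∀ Q ∈ Ps, ∀ x ∈ Q, ∀ y ∈ Q, y < x + C := by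
    intro Q hQ x hx y hy
    obtain ⟨a, b, hab, hbC, hQe⟩ := hblk' Q hQ
    rw [hQe, Set.mem_Icc] at hx hy
    omega
  -- Lemma A: if P ends at i, any part containing a vertex ≤ i lies entirely ≤ i
  have hlemA : ∀ (z : ℕ) (P : Set ℕ), P ∈ Ps → z ∈ P → (∀ w ∈ P, w ≤ z) →
      ∀ x Q, Q ∈ Ps → x ∈ Q → x ≤ z → ∀ y ∈ Q, y ≤ z := by
    intro z P hP hzP hno x Q hQ hxQ hxz y hyQ
    obtain ⟨a, b, hab, hbC, hQe⟩ := hblk' Q hQ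
    rw [hQe, Set.mem_Icc] at hxQ hyQ
    by_cases hbz : b ≤ z
    · omega
    · have hzQ : z ∈ Q := by rw [hQe, Set.mem_Icc]; omega
      have hQP : Q = P := part_eq_of_mem hdisj hQ hP hzQ hzP
      have hbP : b ∈ P := by rw [← hQP, hQe, Set.mem_Icc]; omega
      have := hno b hbP
      omega
  -- counting lemma
  have hcount : ∀ K : Set ℕ, G.IsClique K → K.Finite →
      ∀ pt : ℕ → ℕ, (∀ j, j < k + 2 → pt j ∈ K ∧ 1 ≤ pt j ∧ pt j ≤ n) →
      (∀ j j', j < j' → j' < k + 2 → g (pt j) ≠ g (pt j')) → False := by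
    intro K hK hKfin pt hpt hptne
    have hSle : {P ∈ Ps | (P ∩ K).Nonempty}.ncard ≤ k + 1 := hclq K hK
    have hSsub : {P ∈ Ps | (P ∩ K).Nonempty} ⊆ g '' K := by
      rintro P ⟨hP, x, hxP, hxK⟩
      have hxr : 1 ≤ x ∧ x ≤ n := by
        have : x ∈ ⋃₀ Ps := ⟨P, hP, hxP⟩
        rw [hcover, Set.mem_Icc] at this
        exact this
      have hPg : P = g x := part_eq_of_mem hdisj hP (hg1 x hxr.1 hxr.2) hxP
        (hg2 x hxr.1 hxr.2)
      exact ⟨x, hxK, hPg.symm⟩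
    have hSfin : {P ∈ Ps | (P ∩ K).Nonempty}.Finite := (hKfin.image g).subset hSsub
    set T : Finset (Set ℕ) := (Finset.range (k + 2)).image (fun j => g (pt j)) with hT
    have hTcard : T.card = k + 2 := by
      rw [hT, Finset.card_image_of_injOn, Finset.card_range]
      intro j hj j' hj' heq
      simp only [Finset.coe_range, Set.mem_Iio] at hj hj'
      rcases lt_trichotomy j j' with h | h | h
      · exact absurd heq (hptne j j' h hj')
      · exact h
      · exact absurd heq.symm (hptne j' j h hj)
    have hTS : ↑T ⊆ {P ∈ Ps | (P ∩ K).Nonempty} := by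
      intro P hPT
      rw [hT] at hPT
      simp only [Finset.coe_image, Finset.coe_range, Set.mem_image, Set.mem_Iio] at hPT
      obtain ⟨j, hj, rfl⟩ := hPT
      obtain ⟨hK1, hg1', hg2'⟩ := hpt j hj
      exact ⟨hg1 _ hg1' hg2', ⟨pt j, hg2 _ hg1' hg2', hK1⟩⟩
    have := Set.ncard_le_ncard hTS hSfin
    rw [Set.ncard_coe_finset, hTcard] at this
    omega
  induction hforb with
  | primary i hki hin hclique =>
    intro P hP hiP
    by_contra hcon
    push_neg at hcon
    have hA := hlemA i P hP hiP hcon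
    set m := i - k * C with hm
    have hmi : m + k * C = i := by omega
    have hin' : i ≤ n := by omega
    refine hcount (Set.Icc m (i + 1)) hclique (Set.finite_Icc _ _)
      (fun j => if j ≤ k then m + j * C else i + 1) ?_ ?_
    · intro j hj
      by_cases h : j ≤ k
      · have hjC : j * C ≤ k * C := Nat.mul_le_mul_right C h
        simp only [if_pos h]
        exact ⟨Set.mem_Icc.2 ⟨by omega, by omega⟩, by omega, by omega⟩
      · simp only [if_neg h]
        exact ⟨Set.mem_Icc.2 ⟨by omega, le_refl _⟩, by omega, hin⟩
    · intro j j' hjj hj' heq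
      by_cases h' : j' ≤ k
      · have h : j ≤ k := by omega
        simp only [if_pos h, if_pos h'] at heq
        have hjC : j * C + C ≤ j' * C := by
          have := Nat.mul_le_mul_right C (show j + 1 ≤ j' by omega)
          rw [add_mul, one_mul] at this
          omega
        have hjkC : j' * C ≤ k * C := Nat.mul_le_mul_right C h'
        have hx : m + j * C ∈ g (m + j * C) := hg2 _ (by omega) (by omega)
        have hy : m + j' * C ∈ g (m + j * C) := by
          rw [heq]; exact hg2 _ (by omega) (by omega)
        have := hspace (g (m + j * C)) (hg1 _ (by omega) (by omega)) _ hx _ hy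
        omega
      · have h : j ≤ k := by omega
        simp only [if_pos h, if_neg h'] at heq
        have hjkC : j * C ≤ k * C := Nat.mul_le_mul_right C h
        have hy : i + 1 ∈ g (m + j * C) := by
          rw [heq]; exact hg2 _ (by omega) hin
        have := hA (m + j * C) (g (m + j * C)) (hg1 _ (by omega) (by omega))
          (hg2 _ (by omega) (by omega)) (by omega) (i + 1) hy
        omega
  | secondary v s q hs hsC hq hqk hF hkv hclique ih =>
    intro P hP hiP
    by_contra hcon
    push_neg at hcon
    have hA := hlemA (v - q * C) P hP hiP hcon
    have hk1 : 1 ≤ k := le_trans hq hqk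
    have hCk : C ≤ k * C := Nat.le_mul_of_pos_left C (by omega)
    have hCq : C ≤ q * C := Nat.le_mul_of_pos_left C hq
    have hqkC : q * C ≤ k * C := Nat.mul_le_mul_right C hqk
    have hkq : (k - q) * C = k * C - q * C := Nat.sub_mul k q C
    set m := v - k * C with hm
    have hmv : m + k * C = v := by omega
    set z := v - s + 1 with hz
    have hzv : z = v + 1 - s := by omega
    have hadj : G.Adj m z :=
      hclique (Set.mem_Icc.2 ⟨le_refl _, by omega⟩)
        (Set.mem_Icc.2 ⟨by omega, le_refl _⟩) (by omega)
    have hzn : z ≤ n := ((hrange m z hadj).2).2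
    have hzB : z ∈ g z := hg2 z (by omega) hzn
    have hBmem : g z ∈ Ps := hg1 z (by omega) hzn
    obtain ⟨a, b, hab, hbC, hBe⟩ := hblk' (g z) hBmem
    have hzab : a ≤ z ∧ z ≤ b := by rw [hBe, Set.mem_Icc] at hzB; exact hzB
    have hbv : v + 1 ≤ b := by
      by_contra hb
      push_neg at hb
      have hbB : b ∈ g z := by rw [hBe]; exact Set.mem_Icc.2 ⟨by omega, le_refl _⟩
      obtain ⟨w, hw, hbw⟩ := ih b (Set.mem_Icc.2 ⟨by omega, by omega⟩) (g z) hBmem hbB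
      rw [hBe, Set.mem_Icc] at hw
      omega
    refine hcount (Set.Icc m z) hclique (Set.finite_Icc _ _)
      (fun j => if j ≤ k - q then m + j * C else if j ≤ k then m + (j - 1) * C + 1 else z)
      ?_ ?_
    · intro j hj
      by_cases h1 : j ≤ k - q
      · have hjC : j * C ≤ (k - q) * C := Nat.mul_le_mul_right C h1
        simp only [if_pos h1]
        exact ⟨Set.mem_Icc.2 ⟨by omega, by omega⟩, by omega, by omega⟩
      · by_cases h2 : j ≤ k
        · have hjC : (j - 1) * C + C ≤ k * C := by
            have := Nat.mul_le_mul_right C (show (j - 1) + 1 ≤ k by omega)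
            rw [add_mul, one_mul] at this
            omega
          simp only [if_neg h1, if_pos h2]
          exact ⟨Set.mem_Icc.2 ⟨by omega, by omega⟩, by omega, by omega⟩
        · simp only [if_neg h1, if_neg h2]
          exact ⟨Set.mem_Icc.2 ⟨by omega, le_refl _⟩, by omega, hzn⟩
    · intro j j' hjj hj' heq
      by_cases h1' : j' ≤ k - q
      · -- both low : spacing
        have h1 : j ≤ k - q := by omega
        simp only [if_pos h1, if_pos h1'] at heq
        have hjC : j * C + C ≤ j' * C := by
          have := Nat.mul_le_mul_right C (show j + 1 ≤ j' by omega)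
          rw [add_mul, one_mul] at this
          omega
        have hjkC : j' * C ≤ (k - q) * C := Nat.mul_le_mul_right C h1'
        have hx : m + j * C ∈ g (m + j * C) := hg2 _ (by omega) (by omega)
        have hy : m + j' * C ∈ g (m + j * C) := by
          rw [heq]; exact hg2 _ (by omega) (by omega)
        have := hspace (g (m + j * C)) (hg1 _ (by omega) (by omega)) _ hx _ hy
        omega
      · by_cases h2' : j' ≤ k
        · by_cases h1 : j ≤ k - q
          · -- low vs middle : Lemma A
            simp only [if_pos h1, if_neg h1', if_pos h2'] at heq
            have hjC : j * C ≤ (k - q) * C := Nat.mul_le_mul_right C h1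
            have hjC' : (k - q) * C ≤ (j' - 1) * C := Nat.mul_le_mul_right C (by omega)
            have hjC'' : (j' - 1) * C + C ≤ k * C := by
              have := Nat.mul_le_mul_right C (show (j' - 1) + 1 ≤ k by omega)
              rw [add_mul, one_mul] at this
              omega
            have hy : m + (j' - 1) * C + 1 ∈ g (m + j * C) := by
              rw [heq]; exact hg2 _ (by omega) (by omega)
            have := hA (m + j * C) (g (m + j * C)) (hg1 _ (by omega) (by omega))
              (hg2 _ (by omega) (by omega)) (by omega) _ hy
            omega
          · -- middle vs middle : spacing
            have h2 : j ≤ k := by omega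
            simp only [if_neg h1, if_pos h2, if_neg h1', if_pos h2'] at heq
            have hjC : (j - 1) * C + C ≤ (j' - 1) * C := by
              have := Nat.mul_le_mul_right C (show (j - 1) + 1 ≤ j' - 1 by omega)
              rw [add_mul, one_mul] at this
              omega
            have hjkC : (j' - 1) * C + C ≤ k * C := by
              have := Nat.mul_le_mul_right C (show (j' - 1) + 1 ≤ k by omega)
              rw [add_mul, one_mul] at this
              omega
            have hx : m + (j - 1) * C + 1 ∈ g (m + (j - 1) * C + 1) :=
              hg2 _ (by omega) (by omega)
            have hy : m + (j' - 1) * C + 1 ∈ g (m + (j - 1) * C + 1) := by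
              rw [heq]; exact hg2 _ (by omega) (by omega)
            have := hspace (g (m + (j - 1) * C + 1))
              (hg1 _ (by omega) (by omega)) _ hx _ hy
            omega
        · -- j' = k + 1, pt j' = z
          have hj'e : ¬ j' ≤ k - q := by omega
          by_cases h1 : j ≤ k - q
          · -- low vs z : Lemma A
            simp only [if_pos h1, if_neg hj'e, if_neg h2'] at heq
            have hjC : j * C ≤ (k - q) * C := Nat.mul_le_mul_right C h1
            have hy : z ∈ g (m + j * C) := by rw [heq]; exact hzB
            have := hA (m + j * C) (g (m + j * C)) (hg1 _ (by omega) (by omega))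
              (hg2 _ (by omega) (by omega)) (by omega) z hy
            omega
          · -- middle vs z : left end of B is ≥ v+2-C
            have h2 : j ≤ k := by omega
            simp only [if_neg h1, if_pos h2, if_neg hj'e, if_neg h2'] at heq
            have hjC : (j - 1) * C + C ≤ k * C := by
              have := Nat.mul_le_mul_right C (show (j - 1) + 1 ≤ k by omega)
              rw [add_mul, one_mul] at this
              omega
            have hx : m + (j - 1) * C + 1 ∈ g z := by
              rw [← heq]; exact hg2 _ (by omega) (by omega)
            rw [hBe, Set.mem_Icc] at hx
            omega
end

section
/- Let G be a proper interval graph on {1,…,n}, let C be a positive integer and let k = ⌊(ω(G)−1)/C⌋. Let i be a forbidden vertex and let [j,i] be the left-maximal forbidden block ending at i (i.e., all vertices of [j,i] are forbidden and j−1 is not forbidden), and suppose i−j+1 ≤ C−1. Then i is a leader if and only if the block [i−kC, j] is a clique of G. -/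
/-- let `[j,i]` be the left-maximal forbidden block ending at the
forbidden vertex `i`, of size at most `C-1`.  Then `i` is a leader iff the block
`[i-kC, j]` lies within `{1,…,n}` and is a clique. -/
theorem leader_iff_clique (n : ℕ) (G : SimpleGraph ℕ)
    (hrange : OnRange n G) (humb : Umbrella G) (C k : ℕ) (hC : 0 < C)
    (hk : k = (cliqueNumber G - 1) / C) (i j : ℕ)
    (hj1 : 1 ≤ j) (hji : j ≤ i)
    (hall : ∀ w ∈ Set.Icc j i, Forbidden n G C k w)
    (hmax : ¬ Forbidden n G C k (j - 1))
    (hsize : i - j + 2 ≤ C) :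
    IsLeader n G C k i ↔ (k * C < i ∧ G.IsClique (Set.Icc (i - k * C) j)) := by
  constructor
  · rintro ⟨s, hs1, hsC, hfb, hki, hcl⟩
    refine ⟨hki, ?_⟩
    have hjs : j ≤ i - s + 1 := by
      by_contra h
      push_neg at h
      exact hmax (hfb (j - 1) (Set.mem_Icc.mpr ⟨by omega, by omega⟩))
    exact hcl.subset (Set.Icc_subset_Icc_right hjs)
  · rintro ⟨hki, hcl⟩
    refine ⟨i - j + 1, by omega, by omega, ?_, hki, ?_⟩
    · intro w hw
      apply hall
      simp only [Set.mem_Icc] at hw ⊢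
      omega
    · have h : i - (i - j + 1) + 1 = j := by omega
      rw [h]; exact hcl
end

section
/- Let G be a proper interval graph on {1,…,n}, let C be a positive integer and let k = ⌊(ω(G)−1)/C⌋. Let Q = [u,v] be a maximal clique of G with s = |Q| − (kC+2) ≥ 0. Then the set of vertices i such that the block [i−kC, i+1] is a clique of G contained in Q is exactly the block [v−s−1, v−1]; in particular, all vertices of [v−s−1, v−1] are primarily forbidden. -/
/-- let `Q = [u,v]` be a maximal clique with
`s = |Q| - (kC+2) ≥ 0`.  Then the set of vertices `i` such that the block
`[i-kC, i+1]` lies within `{1,…,n}`, is a clique of `G` and is contained in `Q`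
is exactly the block `[v-s-1, v-1]`; in particular every vertex of
`[v-s-1, v-1]` is primarily forbidden. -/
theorem primarily_forbidden_in_maximal_clique (n : ℕ) (G : SimpleGraph ℕ)
    (hrange : OnRange n G) (humb : Umbrella G) (C k : ℕ) (hC : 0 < C)
    (hk : k = (cliqueNumber G - 1) / C) (u v s : ℕ)
    (hu1 : 1 ≤ u) (huv : u ≤ v) (hvn : v ≤ n)
    (hclique : G.IsClique (Set.Icc u v))
    (hmaximal : ∀ K : Set ℕ, G.IsClique K → Set.Icc u v ⊆ K → K = Set.Icc u v)
    (hs : v - u + 1 = k * C + 2 + s) :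
    {i : ℕ | k * C < i ∧ i + 1 ≤ n ∧ G.IsClique (Set.Icc (i - k * C) (i + 1)) ∧
        Set.Icc (i - k * C) (i + 1) ⊆ Set.Icc u v} = Set.Icc (v - s - 1) (v - 1) ∧
      ∀ i ∈ Set.Icc (v - s - 1) (v - 1),
        k * C < i ∧ i + 1 ≤ n ∧ G.IsClique (Set.Icc (i - k * C) (i + 1)) := by
  have hv : v = u + k * C + 1 + s := by omega
  constructor
  · ext i
    simp only [Set.mem_setOf_eq, Set.mem_Icc]
    constructor
    · rintro ⟨h1, h2, h3, h4⟩
      have hne : i - k * C ≤ i + 1 := by omega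
      rw [Set.Icc_subset_Icc_iff hne] at h4
      omega
    · rintro ⟨h1, h2⟩
      refine ⟨by omega, by omega, ?_, ?_⟩
      · exact hclique.subset (Set.Icc_subset_Icc (by omega) (by omega))
      · exact Set.Icc_subset_Icc (by omega) (by omega)
  · intro i hi
    simp only [Set.mem_Icc] at hi
    exact ⟨by omega, by omega, hclique.subset (Set.Icc_subset_Icc (by omega) (by omega))⟩
end

section
/- Let G be a proper interval graph on {1,…,n}, let C be a positive integer and let k = ⌊(ω(G)−1)/C⌋. Let [v−f+1, v] be a block of forbidden vertices with 1 ≤ f ≤ C−1 that is left-maximal (i.e., all its vertices are forbidden and v−f is not forbidden). Let Q be the largest clique of G whose rightmost vertex is v−f+1 and let s = |Q| − (kC+2). If f + s ≥ 0 then the set of leaders among the vertices of [v−f+1, v] is exactly the block [v−f−s, v]; if f + s < 0 then no vertex of [v−f+1, v] is a leader. -/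
/-- let `[v-f+1, v]` be a left-maximal forbidden block with
`1 ≤ f ≤ C-1`, and let `Q = [w, v-f+1]` be the largest clique with rightmost
vertex `v-f+1`; put `s = |Q| - (kC+2)` (an integer).  Then, among the vertices
of `[v-f+1, v]`, the leaders are exactly the vertices `i` with
`f + s ≥ 0` and `i ≥ v - f - s`; in particular if `f + s < 0` there is no
leader in `[v-f+1, v]`. -/
theorem leaders_in_forbidden_block (n : ℕ) (G : SimpleGraph ℕ)
    (hrange : OnRange n G) (humb : Umbrella G) (C k : ℕ) (hC : 0 < C)
    (hk : k = (cliqueNumber G - 1) / C) (v f w : ℕ)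
    (hf1 : 1 ≤ f) (hfC : f + 1 ≤ C) (hfv : f ≤ v) (hvn : v ≤ n)
    (hforb : ∀ x ∈ Set.Icc (v - f + 1) v, Forbidden n G C k x)
    (hmax : ¬ Forbidden n G C k (v - f))
    (hw1 : 1 ≤ w) (hwv : w ≤ v - f + 1)
    (hQ : G.IsClique (Set.Icc w (v - f + 1)))
    (hlargest : ∀ w' : ℕ, 1 ≤ w' → w' < w → ¬ G.IsClique (Set.Icc w' (v - f + 1))) :
    ∀ i ∈ Set.Icc (v - f + 1) v,
      (IsLeader n G C k i ↔
        (0 ≤ (f : ℤ) + (((v : ℤ) - f + 2 - w) - (k * C + 2)) ∧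
          (v : ℤ) - f - (((v : ℤ) - f + 2 - w) - (k * C + 2)) ≤ i)) := by
  intro i hi
  obtain ⟨hi1, hi2⟩ := hi
  obtain ⟨m, hm⟩ : ∃ m, m = k * C := ⟨_, rfl⟩
  have hrhs : (0 ≤ (f : ℤ) + (((v : ℤ) - f + 2 - w) - (k * C + 2)) ∧
      (v : ℤ) - f - (((v : ℤ) - f + 2 - w) - (k * C + 2)) ≤ i) ↔ w + m ≤ i := by
    have h1 : ((k : ℤ) * C) = (m : ℤ) := by push_cast [hm]; ring
    rw [h1]
    constructor
    · rintro ⟨ha, hb⟩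
      have : (w : ℤ) + m ≤ i := by linarith
      exact_mod_cast this
    · intro h
      have h' : (w : ℤ) + m ≤ i := by exact_mod_cast h
      have hi2' : (i : ℤ) ≤ v := by exact_mod_cast hi2
      constructor <;> linarith
  rw [hrhs]
  unfold IsLeader
  rw [← hm]
  constructor
  · rintro ⟨s, hs1, hsC, hfb, hkc, hcl⟩
    by_contra hcon
    push_neg at hcon
    have hstep : v - f + 1 ≤ i - s + 1 := by
      by_contra hlt
      push_neg at hlt
      exact hmax (hfb (v - f) ⟨by omega, by omega⟩)
    have hclq : G.IsClique (Set.Icc (i - m) (v - f + 1)) :=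
      hcl.subset (Set.Icc_subset_Icc le_rfl hstep)
    exact hlargest (i - m) (by omega) (by omega) hclq
  · intro h
    refine ⟨i - (v - f), by omega, by omega, ?_, by omega, ?_⟩
    · intro x hx
      obtain ⟨hx1, hx2⟩ := hx
      exact hforb x ⟨by omega, by omega⟩
    · refine hQ.subset (Set.Icc_subset_Icc (by omega) (by omega))
end

section
/- Let G be a proper interval graph on {1,…,n} with positive integer vertex weights W satisfying W(v) ≤ C for every vertex v, where C is a positive integer. If the weight-expanded graph WXP(G), regarded as a proper interval graph under the lexicographic order on copies ((u,s) < (v,t) iff u < v, or u = v and s < t), has a [λ,C]-block partition, then G has a weighted [2λ,C]-partition. -/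
/-- The vertex set of the weight-expanded graph: the copies `(v,t)`, `v ∈ {1,…,n}`,
`1 ≤ t ≤ W(v)`. -/
def wxpVerts (n : ℕ) (Wt : ℕ → ℕ) : Set (ℕ × ℕ) :=
  {p : ℕ × ℕ | p.1 ∈ Set.Icc 1 n ∧ p.2 ∈ Set.Icc 1 (Wt p.1)}

/-- The weight-expanded graph `WXP(G)` of a weighted graph on `{1,…,n}`: two
distinct copies are adjacent iff they are copies of the same vertex or copies of
adjacent vertices. -/
def wxpGraph (n : ℕ) (G : SimpleGraph ℕ) (Wt : ℕ → ℕ) : SimpleGraph (ℕ × ℕ) where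
  Adj a b := a ≠ b ∧ a ∈ wxpVerts n Wt ∧ b ∈ wxpVerts n Wt ∧
    (a.1 = b.1 ∨ G.Adj a.1 b.1)
  symm := by
    refine ⟨?_⟩
    rintro a b ⟨h1, h2, h3, h4⟩
    refine ⟨h1.symm, h3, h2, ?_⟩
    cases h4 with
    | inl h => exact Or.inl h.symm
    | inr h => exact Or.inr h.symm
  loopless := ⟨fun a h => h.1 rfl⟩

/-- The lexicographic order on copies. -/
def lexLe (a b : ℕ × ℕ) : Prop := a.1 < b.1 ∨ (a.1 = b.1 ∧ a.2 ≤ b.2)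

/-- A block of `WXP(G)`: a set of vertices of `WXP(G)` that is consecutive in the
lexicographic order (order-convex within the vertex set). -/
def IsLexBlock (n : ℕ) (Wt : ℕ → ℕ) (P : Set (ℕ × ℕ)) : Prop :=
  P ⊆ wxpVerts n Wt ∧
    ∀ a ∈ P, ∀ b ∈ P, ∀ c ∈ wxpVerts n Wt, lexLe a c → lexLe c b → c ∈ P

theorem connectedIn_of_subsingleton {α : Type*} {G : SimpleGraph α} {S : Set α}
    (hS : S.Subsingleton) : ConnectedIn G S := fun _ hu _ hv => hS hu hv ▸ .refl

theorem connectedIn_of_ordConnected {G : SimpleGraph ℕ} {S : Set ℕ} (hS : S.OrdConnected)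
    (hadj : ∀ w ∈ S, w + 1 ∈ S → G.Adj w (w + 1)) : ConnectedIn G S := by
  have forward : ∀ u ∈ S, ∀ v ∈ S, u ≤ v → ReachIn G S u v := by
    intro u hu v hv huv
    induction v, huv using Nat.le_induction with
    | base => exact .refl
    | succ w huw ih =>
      have hw : w ∈ S := hS.out hu hv ⟨huw, w.le_succ⟩
      exact (ih hw).tail ⟨hadj w hw hv, hw, hv⟩
  intro u hu v hv
  rcases le_total u v with huv | hvu
  · exact forward u hu v hv huv
  · exact (forward v hv u hu hvu).symm

theorem Umbrella.adj_succ_s16 {G : SimpleGraph ℕ} (humb : Umbrella G) {x y w : ℕ}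
    (hxy : G.Adj x y) (hxw : x ≤ w) (hwy : w < y) : G.Adj w (w + 1) := by
  have hw : G.Adj w y := by
    rcases hxw.eq_or_lt with rfl | hxw
    · exact hxy
    · exact (humb x w y hxw hwy hxy).2
  rcases (show w + 1 ≤ y from hwy).eq_or_lt with rfl | hy
  · exact hw
  · exact (humb w (w + 1) y w.lt_succ_self hy hw).1

theorem finsum_mem_le_of_subsingleton {α : Type*} {s : Set α} (hs : s.Subsingleton)
    {f : α → ℕ} {C : ℕ}
    (hf : ∀ v ∈ s, f v ≤ C) : ∑ᶠ v ∈ s, f v ≤ C := by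
  rcases hs.eq_empty_or_singleton with rfl | ⟨v, rfl⟩
  · simp
  · simpa using hf v rfl

section Partition

variable {α β : Type*}

def partOf (Qs : Set (Set α)) (a : α) : Set α := ⋃₀ {Q ∈ Qs | a ∈ Q}

theorem partOf_eq {Qs : Set (Set α)} (hQs : Qs.PairwiseDisjoint id) {Q : Set α} (hQ : Q ∈ Qs)
    {a : α} (ha : a ∈ Q) : partOf Qs a = Q := by
  ext b
  constructor
  · rintro ⟨Q', ⟨hQ', haQ'⟩, hb⟩
    rwa [hQs.elim hQ' hQ (Set.not_disjoint_iff.2 ⟨a, haQ', ha⟩)] at hb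
  · exact fun hb => ⟨Q, ⟨hQ, ha⟩, hb⟩

theorem partOf_mem {Qs : Set (Set α)} (hQs : Qs.PairwiseDisjoint id) {a : α}
    (ha : a ∈ ⋃₀ Qs) : partOf Qs a ∈ Qs ∧ a ∈ partOf Qs a := by
  obtain ⟨Q, hQ, haQ⟩ := ha
  rw [partOf_eq hQs hQ haQ]
  exact ⟨hQ, haQ⟩

def fiberPartition (n : ℕ) (φ : ℕ → β) : Set (Set ℕ) :=
  {P | P.Nonempty ∧ ∃ b, P = {v ∈ Set.Icc 1 n | φ v = b}}

theorem isPartitionOf_fiberPartition (n : ℕ) (φ : ℕ → β) :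
    IsPartitionOf n (fiberPartition n φ) := by
  refine ⟨fun P hP => hP.1, ?_, ?_⟩
  · intro P₁ hP₁ P₂ hP₂ hne
    obtain ⟨-, b₁, rfl⟩ := hP₁
    obtain ⟨-, b₂, rfl⟩ := hP₂
    refine Set.disjoint_left.2 fun v hv₁ hv₂ => hne ?_
    rw [← hv₁.2, ← hv₂.2]
  · ext v
    constructor
    · rintro ⟨_, ⟨-, b, rfl⟩, hv⟩
      exact hv.1
    · intro hv
      exact Set.mem_sUnion.2 ⟨{u ∈ Set.Icc 1 n | φ u = φ v}, ⟨⟨v, hv, rfl⟩, φ v, rfl⟩, hv, rfl⟩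

theorem ncard_fiberPartition_meeting_le (n : ℕ) (φ : ℕ → β) (K : Set ℕ) :
    {P ∈ fiberPartition n φ | (P ∩ K).Nonempty}.ncard ≤ (φ '' (K ∩ Set.Icc 1 n)).ncard := by
  have hfin : (φ '' (K ∩ Set.Icc 1 n)).Finite :=
    ((Set.finite_Icc 1 n).subset Set.inter_subset_right).image φ
  calc {P ∈ fiberPartition n φ | (P ∩ K).Nonempty}.ncard
      ≤ ((fun b => {v ∈ Set.Icc 1 n | φ v = b}) '' (φ '' (K ∩ Set.Icc 1 n))).ncard := by
        refine Set.ncard_le_ncard ?_ (hfin.image _)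
        rintro _ ⟨⟨-, b, rfl⟩, v, ⟨hv, hvb⟩, hvK⟩
        exact ⟨b, ⟨v, ⟨hvK, hv⟩, hvb⟩, rfl⟩
    _ ≤ (φ '' (K ∩ Set.Icc 1 n)).ncard := Set.ncard_image_le hfin

end Partition

section WeightExpansion

variable {n : ℕ} {G : SimpleGraph ℕ} {Wt : ℕ → ℕ}

def copies (Wt : ℕ → ℕ) (v : ℕ) : Set (ℕ × ℕ) := {v} ×ˢ Set.Icc 1 (Wt v)

theorem ncard_copies (Wt : ℕ → ℕ) (v : ℕ) : (copies Wt v).ncard = Wt v := by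
  simp [copies, Set.ncard_prod]

theorem mem_copies_one {v : ℕ} (hv : 1 ≤ Wt v) : (v, 1) ∈ copies Wt v :=
  ⟨rfl, le_rfl, hv⟩

theorem finite_wxpVerts (n : ℕ) (Wt : ℕ → ℕ) : (wxpVerts n Wt).Finite := by
  refine ((Set.finite_Icc 1 n).biUnion fun v _ => (Set.finite_singleton v).prod
    (Set.finite_Icc 1 (Wt v))).subset ?_
  rintro ⟨v, t⟩ ⟨hv, ht⟩
  exact Set.mem_biUnion hv ⟨rfl, ht⟩

theorem finsum_mem_le_ncard_of_copies_subset {P : Set ℕ} {Q : Set (ℕ × ℕ)} (hP : P.Finite)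
    (hQ : Q.Finite) (hPQ : ∀ v ∈ P, copies Wt v ⊆ Q) : ∑ᶠ v ∈ P, Wt v ≤ Q.ncard := by
  have hdisj : P.PairwiseDisjoint (copies Wt) := fun u _ v _ huv =>
    Set.disjoint_left.2 fun p hpu hpv => huv (hpu.1.symm.trans hpv.1)
  calc ∑ᶠ v ∈ P, Wt v = ∑ᶠ v ∈ P, (copies Wt v).ncard := by simp only [ncard_copies]
    _ = (⋃ v ∈ P, copies Wt v).ncard :=
        (hP.ncard_biUnion (fun v _ => (Set.finite_singleton v).prod (Set.finite_Icc _ _))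
          hdisj).symm
    _ ≤ Q.ncard := Set.ncard_le_ncard (Set.iUnion₂_subset hPQ) hQ

theorem isClique_wxpGraph {K : Set ℕ} (hK : G.IsClique K) :
    (wxpGraph n G Wt).IsClique {p ∈ wxpVerts n Wt | p.1 ∈ K} := by
  intro p hp q hq hpq
  refine ⟨hpq, hp.1, hq.1, ?_⟩
  by_cases h : p.1 = q.1
  · exact Or.inl h
  · exact Or.inr (hK hp.2 hq.2 h)

theorem ReachIn.exists_adj_of_wxpGraph {Q : Set (ℕ × ℕ)} {a b : ℕ × ℕ}
    (h : ReachIn (wxpGraph n G Wt) Q a b) {w : ℕ} (ha : a.1 ≤ w) (hb : w < b.1) :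
    ∃ x y, G.Adj x y ∧ x ≤ w ∧ w < y := by
  induction h using Relation.ReflTransGen.head_induction_on with
  | refl => omega
  | @head a c hac _ ih =>
    by_cases hc : c.1 ≤ w
    · exact ih hc
    · rcases hac.1.2.2.2 with heq | hadj
      · omega
      · exact ⟨a.1, c.1, hadj, ha, by omega⟩

theorem IsLexBlock.copies_subset {Q : Set (ℕ × ℕ)} (hQ : IsLexBlock n Wt Q) {a b : ℕ × ℕ}
    (ha : a ∈ Q) (hb : b ∈ Q) {v : ℕ} (hv : v ∈ Set.Icc 1 n) (hav : lexLe a (v, 1))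
    (hvb : v < b.1) : copies Wt v ⊆ Q := by
  rintro ⟨x, t⟩ ⟨rfl, ht⟩
  refine hQ.2 a ha b hb _ ⟨hv, ht⟩ ?_ (Or.inl hvb)
  rcases hav with hav | ⟨hav, hav'⟩
  · exact Or.inl hav
  · exact Or.inr ⟨hav, hav'.trans ht.1⟩

theorem IsLexBlock.ordConnected_setOf_copies_subset {Q : Set (ℕ × ℕ)} (hQ : IsLexBlock n Wt Q)
    (hW : ∀ v ∈ Set.Icc 1 n, 1 ≤ Wt v) :
    {u ∈ Set.Icc 1 n | (u, 1) ∈ Q ∧ copies Wt u ⊆ Q}.OrdConnected := by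
  refine ⟨fun u hu w hw x ⟨hux, hxw⟩ => ?_⟩
  rcases hux.eq_or_lt with rfl | hux
  · exact hu
  rcases hxw.eq_or_lt with rfl | hxw
  · exact hw
  have hx : x ∈ Set.Icc 1 n := ⟨hu.1.1.trans hux.le, hxw.le.trans hw.1.2⟩
  have hsub := hQ.copies_subset hu.2.1 hw.2.1 hx (Or.inl hux) hxw
  exact ⟨hx, hsub (mem_copies_one (hW x hx)), hsub⟩

theorem IsLexBlock.subsingleton_setOf_not_copies_subset {Q : Set (ℕ × ℕ)}
    (hQ : IsLexBlock n Wt Q) :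
    {u ∈ Set.Icc 1 n | (u, 1) ∈ Q ∧ ¬copies Wt u ⊆ Q}.Subsingleton := by
  have key : ∀ u w, u ∈ {u ∈ Set.Icc 1 n | (u, 1) ∈ Q ∧ ¬copies Wt u ⊆ Q} → (w, 1) ∈ Q →
      ¬u < w := fun u w hu hw huw =>
    hu.2.2 (hQ.copies_subset hu.2.1 hw hu.1 (Or.inr ⟨rfl, le_rfl⟩) huw)
  intro u hu w hw
  by_contra hne
  rcases lt_or_gt_of_ne hne with huw | hwu
  · exact key u w hu hw.2.1 huw
  · exact key w u hw hu.2.1 hwu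

theorem connectedIn_of_isLexBlock (humb : Umbrella G) {Q : Set (ℕ × ℕ)}
    (hQ : IsLexBlock n Wt Q) (hconn : ConnectedIn (wxpGraph n G Wt) Q)
    (hW : ∀ v ∈ Set.Icc 1 n, 1 ≤ Wt v) :
    ConnectedIn G {u ∈ Set.Icc 1 n | (u, 1) ∈ Q ∧ copies Wt u ⊆ Q} := by
  refine connectedIn_of_ordConnected (hQ.ordConnected_setOf_copies_subset hW)
    fun w hw hw' => ?_
  obtain ⟨x, y, hxy, hxw, hwy⟩ :=
    (hconn _ hw.2.1 _ hw'.2.1).exists_adj_of_wxpGraph le_rfl w.lt_succ_self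
  exact humb.adj_succ_s16 hxy hxw hwy

end WeightExpansion

section Labelling

variable {n : ℕ} {Wt : ℕ → ℕ} {Qs : Set (Set (ℕ × ℕ))}

def wxpLabel (Qs : Set (Set (ℕ × ℕ))) (Wt : ℕ → ℕ) (v : ℕ) : Set (ℕ × ℕ) × Prop :=
  (partOf Qs (v, 1), copies Wt v ⊆ partOf Qs (v, 1))

theorem partOf_one_mem (hdisj : Qs.PairwiseDisjoint id)
    (hunion : ⋃₀ Qs = wxpVerts n Wt) (hW : ∀ v ∈ Set.Icc 1 n, 1 ≤ Wt v) {v : ℕ}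
    (hv : v ∈ Set.Icc 1 n) :
    partOf Qs (v, 1) ∈ Qs ∧ (v, 1) ∈ partOf Qs (v, 1) :=
  partOf_mem hdisj (hunion ▸ ⟨hv, le_rfl, hW v hv⟩)

theorem fiber_wxpLabel_eq (hdisj : Qs.PairwiseDisjoint id)
    (hunion : ⋃₀ Qs = wxpVerts n Wt) (hW : ∀ v ∈ Set.Icc 1 n, 1 ≤ Wt v) {v : ℕ}
    (hv : v ∈ Set.Icc 1 n) :
    {u ∈ Set.Icc 1 n | wxpLabel Qs Wt u = wxpLabel Qs Wt v} =
      {u ∈ Set.Icc 1 n | (u, 1) ∈ partOf Qs (v, 1) ∧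
        (copies Wt u ⊆ partOf Qs (v, 1) ↔ copies Wt v ⊆ partOf Qs (v, 1))} := by
  ext u
  simp only [Set.mem_ofPred_eq, wxpLabel, Prod.mk.injEq, and_congr_right_iff]
  intro hu
  constructor
  · rintro ⟨hQ, hfull⟩
    refine ⟨hQ ▸ (partOf_one_mem hdisj hunion hW hu).2, ?_⟩
    rw [← eq_iff_iff, ← hfull, hQ]
  · rintro ⟨hQ, hfull⟩
    rw [partOf_eq hdisj (partOf_one_mem hdisj hunion hW hv).1 hQ]
    exact ⟨rfl, propext hfull⟩

theorem ncard_image_wxpLabel_le (hdisj : Qs.PairwiseDisjoint id)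
    (hunion : ⋃₀ Qs = wxpVerts n Wt) (hW : ∀ v ∈ Set.Icc 1 n, 1 ≤ Wt v) (K : Set ℕ) :
    (wxpLabel Qs Wt '' (K ∩ Set.Icc 1 n)).ncard ≤
      2 * {Q ∈ Qs | (Q ∩ {p ∈ wxpVerts n Wt | p.1 ∈ K}).Nonempty}.ncard := by
  have hQs : Qs.Finite := (finite_wxpVerts n Wt).finite_subsets.subset fun Q hQ =>
    hunion ▸ Set.subset_sUnion_of_mem hQ
  set T := {Q ∈ Qs | (Q ∩ {p ∈ wxpVerts n Wt | p.1 ∈ K}).Nonempty}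
  have hsub : wxpLabel Qs Wt '' (K ∩ Set.Icc 1 n) ⊆ T ×ˢ Set.univ := by
    rintro _ ⟨v, ⟨hvK, hv⟩, rfl⟩
    obtain ⟨hQ, hvQ⟩ := partOf_one_mem hdisj hunion hW hv
    exact ⟨⟨hQ, (v, 1), hvQ, ⟨hv, le_rfl, hW v hv⟩, hvK⟩, trivial⟩
  calc (wxpLabel Qs Wt '' (K ∩ Set.Icc 1 n)).ncard
      ≤ (T ×ˢ (Set.univ : Set Prop)).ncard :=
        Set.ncard_le_ncard hsub ((hQs.subset fun _ hQ => hQ.1).prod Set.finite_univ)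
    _ = 2 * T.ncard := by
        rw [Set.ncard_prod, Set.ncard_univ, Nat.card_eq_fintype_card, Fintype.card_prop,
          mul_comm]

end Labelling

theorem connectedIn_and_finsum_le_of_mem_fiberPartition {n : ℕ} {G : SimpleGraph ℕ}
    (humb : Umbrella G) {Wt : ℕ → ℕ} {C : ℕ} (hWt : ∀ v ∈ Set.Icc 1 n, 1 ≤ Wt v ∧ Wt v ≤ C)
    {Qs : Set (Set (ℕ × ℕ))} (hdisj : Qs.PairwiseDisjoint id)
    (hunion : ⋃₀ Qs = wxpVerts n Wt)
    (hparts : ∀ Q ∈ Qs, ConnectedIn (wxpGraph n G Wt) Q ∧ Q.ncard ≤ C)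
    (hblock : ∀ Q ∈ Qs, IsLexBlock n Wt Q) {P : Set ℕ}
    (hP : P ∈ fiberPartition n (wxpLabel Qs Wt)) :
    ConnectedIn G P ∧ ∑ᶠ v ∈ P, Wt v ≤ C := by
  have hW : ∀ v ∈ Set.Icc 1 n, 1 ≤ Wt v := fun v hv => (hWt v hv).1
  obtain ⟨hne, b, rfl⟩ := hP
  obtain ⟨v, hv, hvb⟩ := hne
  rw [← hvb, fiber_wxpLabel_eq hdisj hunion hW hv]
  set Q := partOf Qs (v, 1)
  have hQ : Q ∈ Qs := (partOf_one_mem hdisj hunion hW hv).1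
  by_cases hfull : copies Wt v ⊆ Q
  · simp only [hfull, iff_true]
    refine ⟨connectedIn_of_isLexBlock humb (hblock Q hQ) (hparts Q hQ).1 hW, ?_⟩
    calc _ ≤ Q.ncard := finsum_mem_le_ncard_of_copies_subset
            ((Set.finite_Icc 1 n).subset fun u hu => hu.1)
            ((finite_wxpVerts n Wt).subset (hunion ▸ Set.subset_sUnion_of_mem hQ))
            fun u hu => hu.2.2
      _ ≤ C := (hparts Q hQ).2
  · simp only [hfull, iff_false]
    have hsingle := (hblock Q hQ).subsingleton_setOf_not_copies_subset
    exact ⟨connectedIn_of_subsingleton hsingle,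
      finsum_mem_le_of_subsingleton hsingle fun u hu => (hWt u hu.1).2⟩

theorem wxp_blockPartition_to_weighted_partition_general (n : ℕ) (G : SimpleGraph ℕ)
    (humb : Umbrella G) (Wt : ℕ → ℕ) (L C : ℕ)
    (hWt : ∀ v ∈ Set.Icc 1 n, 1 ≤ Wt v ∧ Wt v ≤ C)
    (h : ∃ Qs : Set (Set (ℕ × ℕ)),
      ((∀ P ∈ Qs, P.Nonempty) ∧ Qs.PairwiseDisjoint id ∧ ⋃₀ Qs = wxpVerts n Wt) ∧
      (∀ P ∈ Qs, ConnectedIn (wxpGraph n G Wt) P ∧ P.ncard ≤ C) ∧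
      (∀ K : Set (ℕ × ℕ), (wxpGraph n G Wt).IsClique K →
        {P ∈ Qs | (P ∩ K).Nonempty}.ncard ≤ L) ∧
      (∀ P ∈ Qs, IsLexBlock n Wt P)) :
    ∃ Ps : Set (Set ℕ), IsPartitionOf n Ps ∧
      (∀ P ∈ Ps, ConnectedIn G P ∧ (∑ᶠ v ∈ P, Wt v) ≤ C) ∧
      (∀ K : Set ℕ, G.IsClique K → {P ∈ Ps | (P ∩ K).Nonempty}.ncard ≤ 2 * L) := by
  obtain ⟨Qs, ⟨-, hdisj, hunion⟩, hparts, hclique, hblock⟩ := h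
  have hW : ∀ v ∈ Set.Icc 1 n, 1 ≤ Wt v := fun v hv => (hWt v hv).1
  refine ⟨fiberPartition n (wxpLabel Qs Wt), isPartitionOf_fiberPartition n _,
    fun P hP => connectedIn_and_finsum_le_of_mem_fiberPartition humb hWt hdisj hunion hparts
      hblock hP, fun K hK => ?_⟩
  calc _ ≤ (wxpLabel Qs Wt '' (K ∩ Set.Icc 1 n)).ncard := ncard_fiberPartition_meeting_le n _ K
    _ ≤ 2 * {Q ∈ Qs | (Q ∩ {p ∈ wxpVerts n Wt | p.1 ∈ K}).Nonempty}.ncard :=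
        ncard_image_wxpLabel_le hdisj hunion hW K
    _ ≤ 2 * L := Nat.mul_le_mul_left 2 (hclique _ (isClique_wxpGraph hK))

/-- if every weight satisfies `W(v) ≤ C` and the weight-expanded
graph `WXP(G)` (a proper interval graph under the lexicographic order) has a
`[λ,C]`-block partition, then the weighted graph `G` has a weighted
`[2λ,C]`-partition. -/
theorem wxp_blockPartition_to_weighted_partition (n : ℕ) (G : SimpleGraph ℕ)
    (hrange : OnRange n G) (humb : Umbrella G) (Wt : ℕ → ℕ) (L C : ℕ)
    (hL : 0 < L) (hC : 0 < C) (hWt : ∀ v ∈ Set.Icc 1 n, 1 ≤ Wt v ∧ Wt v ≤ C)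
    (h : ∃ Qs : Set (Set (ℕ × ℕ)),
      ((∀ P ∈ Qs, P.Nonempty) ∧ Qs.PairwiseDisjoint id ∧ ⋃₀ Qs = wxpVerts n Wt) ∧
      (∀ P ∈ Qs, ConnectedIn (wxpGraph n G Wt) P ∧ P.ncard ≤ C) ∧
      (∀ K : Set (ℕ × ℕ), (wxpGraph n G Wt).IsClique K →
        {P ∈ Qs | (P ∩ K).Nonempty}.ncard ≤ L) ∧
      (∀ P ∈ Qs, IsLexBlock n Wt P)) :
    ∃ Ps : Set (Set ℕ), IsPartitionOf n Ps ∧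
      (∀ P ∈ Ps, ConnectedIn G P ∧ (∑ᶠ v ∈ P, Wt v) ≤ C) ∧
      (∀ K : Set ℕ, G.IsClique K → {P ∈ Ps | (P ∩ K).Nonempty}.ncard ≤ 2 * L) :=
  wxp_blockPartition_to_weighted_partition_general n G humb Wt L C hWt h
end
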